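/- Let f ∈ BV(ℝ) and let (f_j) ⊂ BV(ℝ) with ‖f_j − f‖_{BV} → 0. Suppose x ∈ ℝ, and for each j there is a bounded interval I_{x,j} ∋ x with (1/|I_{x,j}|)∫_{I_{x,j}} |f_j| = M̃f_j(x). If the indicator functions χ_{I_{x,j}} converge a.e. to χ_I for some interval I with 0 < |I| < ∞, then (1/|I|)∫_I |f| = M̃f(x). -/

import Mathlib

/-!
The a.e. convergence of the indicators forces the endpoints to converge: `a_j → c`, `b_j → d`.
The BV norm dominates the sup norm, and both interval averages and `M̃` are 1-Lipschitz for the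
sup norm, so `M̃ f_j(x) → M̃ f(x)` while the averages of `f_j` over `(a_j, b_j)` converge to the
average of `f` over `(c, d)`. These two sequences coincide, hence so do their limits.
-/

open MeasureTheory Filter Set Topology

/-- Average of |f| over the interval (a,b). -/
noncomputable def mAvg (f : ℝ → ℝ) (a b : ℝ) : ℝ := (∫ t in a..b, |f t|) / (b - a)

/-- Uncentered Hardy–Littlewood maximal function. -/
noncomputable def uMax (f : ℝ → ℝ) (x : ℝ) : ℝ :=
  sSup {y | ∃ a b : ℝ, a < b ∧ a ≤ x ∧ x ≤ b ∧ y = mAvg f a b}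

/-- f has bounded variation on ℝ. -/
def BVfun (f : ℝ → ℝ) : Prop := BoundedVariationOn f Set.univ

/-- Total variation of f over a set, as a real number. -/
noncomputable def varOn (f : ℝ → ℝ) (s : Set ℝ) : ℝ := (eVariationOn f s).toReal

/-- BV norm: |f(-∞)| + Var(f). -/
noncomputable def bvNorm (f : ℝ → ℝ) : ℝ :=
  |limUnder Filter.atBot f| + varOn f Set.univ

/-- Upper precise representative: limsup over intervals I ∋ x with |I| → 0 of averages of |f|. -/
noncomputable def ubar (f : ℝ → ℝ) (x : ℝ) : ℝ :=
  ⨅ h : {h : ℝ // 0 < h},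
    sSup {y | ∃ a b : ℝ, a < b ∧ a ≤ x ∧ x ≤ b ∧ b - a ≤ h.1 ∧ y = mAvg f a b}

/-- The open "interval" (a,b) in ℝ with extended-real endpoints. -/
noncomputable def erealIoo (a b : EReal) : Set ℝ := {x : ℝ | a < (x : EReal) ∧ (x : EReal) < b}

/-- Value of g at an extended-real point, understood as a limit at ±∞. -/
noncomputable def valAt (g : ℝ → ℝ) (a : EReal) : ℝ :=
  if a = ⊥ then limUnder Filter.atBot g
  else if a = ⊤ then limUnder Filter.atTop g
  else g a.toReal

section Variation

variable {α E : Type*} [LinearOrder α] [SeminormedAddCommGroup E]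

theorem eVariationOn_sub_le (f g : α → E) (s : Set α) :
    eVariationOn (f - g) s ≤ eVariationOn f s + eVariationOn g s := by
  refine iSup_le fun ⟨n, u, hu, us⟩ => ?_
  calc ∑ i ∈ Finset.range n, edist ((f - g) (u (i + 1))) ((f - g) (u i))
      ≤ ∑ i ∈ Finset.range n,
          (edist (f (u (i + 1))) (f (u i)) + edist (g (u (i + 1))) (g (u i))) := by
        refine Finset.sum_le_sum fun i _ => ?_
        simpa [sub_eq_add_neg] using
          edist_add_add_le (f (u (i + 1))) (-g (u (i + 1))) (f (u i)) (-g (u i))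
    _ ≤ eVariationOn f s + eVariationOn g s := by
      rw [Finset.sum_add_distrib]
      exact add_le_add (eVariationOn.sum_le hu us) (eVariationOn.sum_le hu us)

theorem BoundedVariationOn.sub {f g : α → E} {s : Set α} (hf : BoundedVariationOn f s)
    (hg : BoundedVariationOn g s) : BoundedVariationOn (f - g) s :=
  ne_top_of_le_ne_top (ENNReal.add_ne_top.2 ⟨hf, hg⟩) (eVariationOn_sub_le f g s)

end Variation

namespace BoundedVariationOn

variable {g : ℝ → ℝ}

theorem intervalIntegrable {a b : ℝ} (hg : BoundedVariationOn g (uIcc a b)) :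
    IntervalIntegrable g volume a b := by
  obtain ⟨p, q, hp, hq, rfl⟩ := hg.locallyBoundedVariationOn.exists_monotoneOn_sub_monotoneOn
  exact hp.intervalIntegrable.sub hq.intervalIntegrable

theorem abs_le_bvNorm (hg : BoundedVariationOn g univ) (t : ℝ) : |g t| ≤ bvNorm g := by
  have hclose : ∀ s, |g t| ≤ |g s| + varOn g univ := fun s => by
    have := hg.dist_le (mem_univ t) (mem_univ s)
    rw [Real.dist_eq] at this
    unfold varOn
    linarith [abs_sub_abs_le_abs_sub (g t) (g s)]
  exact ge_of_tendsto (hg.tendsto_atBot_limUnder.abs.add_const _) (Eventually.of_forall hclose)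

end BoundedVariationOn

section Averages

variable {f g : ℝ → ℝ} {a b x K : ℝ}

theorem mAvg_le_of_abs_le (hK : ∀ t, |f t| ≤ K) (hab : a < b) : mAvg f a b ≤ K := by
  have hba : 0 < b - a := sub_pos.2 hab
  have h := intervalIntegral.norm_integral_le_of_norm_le_const (a := a) (b := b)
    (f := fun t => |f t|) fun t _ => by simpa using hK t
  rw [Real.norm_eq_abs, abs_of_pos hba] at h
  rw [mAvg, div_le_iff₀ hba]
  exact (le_abs_self _).trans h

theorem abs_mAvg_sub_mAvg_le (hg : IntervalIntegrable g volume a b)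
    (hf : IntervalIntegrable f volume a b) (hK : ∀ t, |g t - f t| ≤ K) (hab : a < b) :
    |mAvg g a b - mAvg f a b| ≤ K := by
  have hba : 0 < b - a := sub_pos.2 hab
  have h := intervalIntegral.norm_integral_le_of_norm_le_const (a := a) (b := b)
    (f := fun t => |g t| - |f t|) fun t _ => (abs_abs_sub_abs_le_abs_sub _ _).trans (hK t)
  rw [Real.norm_eq_abs, abs_of_pos hba, intervalIntegral.integral_sub hg.abs hf.abs] at h
  rw [mAvg, mAvg, ← sub_div, abs_div, abs_of_pos hba, div_le_iff₀ hba]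
  exact h

theorem mAvg_le_uMax (hK : ∀ t, |f t| ≤ K) (hab : a < b) (hax : a ≤ x) (hxb : x ≤ b) :
    mAvg f a b ≤ uMax f x :=
  le_csSup ⟨K, by rintro _ ⟨a, b, hab, -, -, rfl⟩; exact mAvg_le_of_abs_le hK hab⟩
    ⟨a, b, hab, hax, hxb, rfl⟩

theorem uMax_le (h : ∀ a b, a < b → a ≤ x → x ≤ b → mAvg f a b ≤ K) : uMax f x ≤ K :=
  csSup_le ⟨_, x - 1, x + 1, by linarith, by linarith, by linarith, rfl⟩
    (by rintro _ ⟨a, b, hab, hax, hxb, rfl⟩; exact h a b hab hax hxb)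

theorem uMax_le_uMax_add {Kf : ℝ} (hfK : ∀ t, |f t| ≤ Kf)
    (hg : ∀ a b, IntervalIntegrable g volume a b) (hf : ∀ a b, IntervalIntegrable f volume a b)
    (hK : ∀ t, |g t - f t| ≤ K) : uMax g x ≤ uMax f x + K :=
  uMax_le fun a b hab hax hxb => by
    linarith [(abs_le.1 (abs_mAvg_sub_mAvg_le (hg a b) (hf a b) hK hab)).2,
      mAvg_le_uMax hfK hab hax hxb]

theorem abs_uMax_sub_uMax_le {Kg Kf : ℝ} (hgK : ∀ t, |g t| ≤ Kg) (hfK : ∀ t, |f t| ≤ Kf)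
    (hg : ∀ a b, IntervalIntegrable g volume a b) (hf : ∀ a b, IntervalIntegrable f volume a b)
    (hK : ∀ t, |g t - f t| ≤ K) : |uMax g x - uMax f x| ≤ K := by
  have hgf := uMax_le_uMax_add (x := x) hfK hg hf hK
  have hfg := uMax_le_uMax_add (x := x) hgK hf hg fun t => abs_sub_comm (f t) (g t) ▸ hK t
  exact abs_sub_le_iff.2 ⟨by linarith, by linarith⟩

theorem tendsto_mAvg {ι : Type*} {l : Filter ι} (hf : ∀ a b, IntervalIntegrable f volume a b)
    {a b : ι → ℝ} {c d : ℝ} (hcd : c < d) (ha : Tendsto a l (𝓝 c)) (hb : Tendsto b l (𝓝 d)) :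
    Tendsto (fun j => mAvg f (a j) (b j)) l (𝓝 (mAvg f c d)) := by
  have habs : ∀ a b, IntervalIntegrable (fun t => |f t|) volume a b := fun a b => (hf a b).abs
  have hF := intervalIntegral.continuous_primitive habs 0
  set F := fun v => ∫ t in 0..v, |f t|
  have hsplit : ∀ u v, mAvg f u v = (F v - F u) / (v - u) := fun u v => by
    rw [mAvg, intervalIntegral.integral_interval_sub_left (habs 0 v) (habs 0 u)]
  simp only [hsplit]
  exact (((hF.tendsto d).comp hb).sub ((hF.tendsto c).comp ha)).div (hb.sub ha)
    (sub_ne_zero.2 hcd.ne')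

end Averages

section Endpoints

open OrderDual

variable {α ι : Type*} [LinearOrder α] [TopologicalSpace α] [OrderTopology α] [DenselyOrdered α]
  {l : Filter ι} {a b : ι → α} {c d : α} {D : Set α}

theorem tendsto_left_of_eventually_mem_Ioo_iff (hD : Dense D) (hcd : c < d)
    (h : ∀ t ∈ D, ∀ᶠ j in l, (t ∈ Ioo (a j) (b j) ↔ t ∈ Ioo c d)) : Tendsto a l (𝓝 c) := by
  obtain ⟨s, hsD, hs⟩ := hD.exists_between hcd
  have hbs : ∀ᶠ j in l, s < b j := (h s hsD).mono fun j hj => (hj.2 hs).2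
  refine tendsto_order.2 ⟨fun c' hc' => ?_, fun c' hc' => ?_⟩
  · obtain ⟨t, htD, ht⟩ := hD.exists_between hc'
    filter_upwards [h t htD, hbs] with j hj hjs
    by_contra! hac'
    exact (hj.1 ⟨hac'.trans_lt ht.1, ht.2.trans (hs.1.trans hjs)⟩).1.not_gt ht.2
  · obtain ⟨t, htD, ht⟩ := hD.exists_between (lt_min hc' hcd)
    filter_upwards [h t htD] with j hj
    exact (hj.2 ⟨ht.1, ht.2.trans_le (min_le_right _ _)⟩).1.trans (ht.2.trans_le (min_le_left _ _))

theorem tendsto_endpoints_of_eventually_mem_Ioo_iff (hD : Dense D) (hcd : c < d)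
    (h : ∀ t ∈ D, ∀ᶠ j in l, (t ∈ Ioo (a j) (b j) ↔ t ∈ Ioo c d)) :
    Tendsto a l (𝓝 c) ∧ Tendsto b l (𝓝 d) := by
  refine ⟨tendsto_left_of_eventually_mem_Ioo_iff hD hcd h, ?_⟩
  exact tendsto_left_of_eventually_mem_Ioo_iff (α := αᵒᵈ) (D := ofDual ⁻¹' D)
    (a := toDual ∘ b) (b := toDual ∘ a) (c := toDual d) (d := toDual c) hD hcd
    fun t ht => (h (ofDual t) ht).mono fun j hj => by simpa [and_comm] using hj

end Endpoints

theorem stmt10 (f : ℝ → ℝ) (hf : BVfun f) (fj : ℕ → ℝ → ℝ) (hfj : ∀ j, BVfun (fj j))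
    (hconv : Tendsto (fun j => bvNorm (fj j - f)) atTop (𝓝 0))
    (x : ℝ) (aj bj : ℕ → ℝ)
    (hIj : ∀ j, aj j < bj j ∧ aj j ≤ x ∧ x ≤ bj j ∧ mAvg (fj j) (aj j) (bj j) = uMax (fj j) x)
    (c d : ℝ) (hcd : c < d)
    (hae : ∀ᵐ t : ℝ, Tendsto (fun j => Set.indicator (Set.Ioo (aj j) (bj j)) (fun _ => (1:ℝ)) t)
      atTop (𝓝 (Set.indicator (Set.Ioo c d) (fun _ => (1:ℝ)) t))) :
    mAvg f c d = uMax f x := by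
  unfold BVfun at hf hfj
  have hD := Measure.dense_of_ae (hae.mono fun t ht =>
    (tendsto_indicator_const_apply_iff_eventually _ (1 : ℝ) t).1 ht)
  obtain ⟨ha, hb⟩ := tendsto_endpoints_of_eventually_mem_Ioo_iff hD hcd fun t ht => ht
  have hint : ∀ {g : ℝ → ℝ}, BoundedVariationOn g univ → ∀ a b, IntervalIntegrable g volume a b :=
    fun hg a b => (hg.mono (subset_univ _)).intervalIntegrable
  have hdist : ∀ j t, |fj j t - f t| ≤ bvNorm (fj j - f) := fun j =>
    ((hfj j).sub hf).abs_le_bvNorm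
  have hsmall : ∀ {u v : ℕ → ℝ}, (∀ j, |u j - v j| ≤ bvNorm (fj j - f)) →
      Tendsto (fun j => dist (v j) (u j)) atTop (𝓝 0) := fun h =>
    squeeze_zero (fun _ => dist_nonneg) (fun j => by rw [dist_comm]; exact h j) hconv
  have havg : Tendsto (fun j => mAvg (fj j) (aj j) (bj j)) atTop (𝓝 (mAvg f c d)) :=
    (tendsto_mAvg (hint hf) hcd ha hb).congr_dist <| hsmall fun j =>
      abs_mAvg_sub_mAvg_le (hint (hfj j) _ _) (hint hf _ _) (hdist j) (hIj j).1
  have hmax : Tendsto (fun j => uMax (fj j) x) atTop (𝓝 (uMax f x)) :=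
    tendsto_const_nhds.congr_dist <| hsmall fun j =>
      abs_uMax_sub_uMax_le (hfj j).abs_le_bvNorm hf.abs_le_bvNorm (hint (hfj j)) (hint hf)
        (hdist j)
  exact tendsto_nhds_unique (havg.congr fun j => (hIj j).2.2.2) hmax
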